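/- If T is a finite tree that is not a path, then dim(T) = σ(T) − ex(T), where σ(T) is the number of leaves of T and ex(T) is the number of exterior major vertices of T. -/

import Mathlib

open SimpleGraph

/-- `W` is a resolving set of `G`: every pair of distinct vertices is
distinguished by its distance to some vertex of `W`. -/
def IsResolving {V : Type*} (G : SimpleGraph V) (W : Set V) : Prop :=
  ∀ x y : V, x ≠ y → ∃ z ∈ W, G.dist x z ≠ G.dist y z

/-- The metric dimension of `G`: the minimum cardinality of a resolving set. -/
noncomputable def metricDim {V : Type*} (G : SimpleGraph V) : ℕ :=
  sInf {n | ∃ W : Set V, W.ncard = n ∧ IsResolving G W}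

/-- A leaf of `T`: a vertex of degree 1. -/
def IsLeaf {V : Type*} (T : SimpleGraph V) (v : V) : Prop :=
  (T.neighborSet v).ncard = 1

/-- A major vertex of `T`: a vertex of degree at least 3. -/
def IsMajor {V : Type*} (T : SimpleGraph V) (v : V) : Prop :=
  3 ≤ (T.neighborSet v).ncard

/-- A leaf `ℓ` is a terminal vertex of a major vertex `v` if `ℓ` is strictly closer
to `v` than to any other major vertex. -/
def IsTerminalOf {V : Type*} (T : SimpleGraph V) (ℓ v : V) : Prop :=
  IsLeaf T ℓ ∧ IsMajor T v ∧ ∀ w, IsMajor T w → w ≠ v → T.dist ℓ v < T.dist ℓ w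

/-- An exterior major vertex of `T`: a major vertex having at least one terminal
vertex. -/
def IsExteriorMajor {V : Type*} (T : SimpleGraph V) (v : V) : Prop :=
  ∃ ℓ, IsTerminalOf T ℓ v


/-!
Lower bound: every leaf `l` is a terminal vertex of exactly one major vertex `v`, and the legs
(the path from `l` to `v`, without `v`) of distinct leaves are disjoint. If the legs of two
terminal vertices of the same `v` both miss a resolving set `W`, the neighbours of `v` on these
legs have the same distance to every vertex of `W`. So at most one leg at each exterior major
vertex misses `W`, and `W` has its own vertex on each of the other legs.

Upper bound: the leaves minus one terminal vertex of each exterior major vertex resolve `T`.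
Suppose `x ≠ y` are not resolved. A median `m` of `x`, `y` and a vertex of `W` is equidistant
from `x` and `y`, and every vertex beyond the neighbour of `m` towards `x` is closer to `x`
(symmetrically for `y`). One of these two branches meets `W`: beyond a farthest major vertex of
a branch lie two of its terminal vertices, a branch without major vertices ends in a terminal
vertex of `m` when `m` is major, and otherwise every major vertex lies in one of the branches.
-/

namespace SimpleGraph

variable {V : Type*} {G : SimpleGraph V} {a b c l r u v w x y z : V}

def Between (G : SimpleGraph V) (x z y : V) : Prop :=
  G.dist x z + G.dist z y = G.dist x y

theorem Between.symm (h : G.Between x z y) : G.Between y z x := by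
  have := G.dist_comm (u := x) (v := z)
  have := G.dist_comm (u := z) (v := y)
  have := G.dist_comm (u := x) (v := y)
  unfold Between at *
  omega

theorem between_self_left (x y : V) : G.Between x x y := by simp [Between]

theorem between_self_right (x y : V) : G.Between x y y := by simp [Between]

section Connected

variable (hG : G.Connected)
include hG

theorem Between.trans_left (h₁ : G.Between w y z) (h₂ : G.Between w x y) : G.Between w x z := by
  have := hG.dist_triangle (u := w) (v := x) (w := z)
  have := hG.dist_triangle (u := x) (v := y) (w := z)
  unfold Between at *
  omega

theorem Between.trans_left_right (h₁ : G.Between w y z) (h₂ : G.Between w x y) :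
    G.Between x y z := by
  have := hG.dist_triangle (u := w) (v := x) (w := z)
  have := hG.dist_triangle (u := x) (v := y) (w := z)
  unfold Between at *
  omega

theorem Between.eq_of_between_of_between (h : G.Between x z y) (hx : G.Between z a x)
    (hy : G.Between z a y) : a = z := by
  have := hG.dist_triangle (u := x) (v := a) (w := y)
  have := G.dist_comm (u := x) (v := z)
  have := G.dist_comm (u := x) (v := a)
  have : G.dist z a = 0 := by
    unfold Between at *
    omega
  exact (hG.dist_eq_zero_iff.1 this).symm

theorem eq_of_between_self (h : G.Between x a x) : a = x := by
  have : G.dist x a = 0 := by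
    unfold Between at h
    rw [dist_self] at h
    omega
  exact (hG.dist_eq_zero_iff.1 this).symm

theorem Connected.exists_adj_between (huv : u ≠ v) : ∃ a, G.Adj u a ∧ G.Between u a v := by
  obtain ⟨p, -, hp⟩ := hG.exists_path_of_dist u v
  cases p with
  | nil => exact absurd rfl huv
  | @cons _ a _ hua q =>
    refine ⟨a, hua, ?_⟩
    have := hG.dist_triangle (u := u) (v := a) (w := v)
    have := dist_le q
    rw [Walk.length_cons] at hp
    unfold Between
    rw [dist_eq_one_iff_adj.2 hua] at *
    omega

end Connected

namespace IsTree

variable (hT : G.IsTree)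
include hT

theorem length_eq_dist {p : G.Walk u v} (hp : p.IsPath) : p.length = G.dist u v := by
  obtain ⟨q, hq, hlen⟩ := hT.connected.exists_path_of_dist u v
  rwa [(hT.existsUnique_path u v).unique hp hq]

theorem between_iff_mem_support {p : G.Walk x y} (hp : p.IsPath) :
    G.Between x z y ↔ z ∈ p.support := by
  classical
  constructor
  · intro h
    obtain ⟨q₁, -, h₁⟩ := hT.connected.exists_path_of_dist x z
    obtain ⟨q₂, -, h₂⟩ := hT.connected.exists_path_of_dist z y
    have hq : (q₁.append q₂).IsPath := by
      apply Walk.isPath_of_length_eq_dist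
      rw [Walk.length_append, h₁, h₂]
      exact h
    rw [(hT.existsUnique_path x y).unique hp hq, Walk.mem_support_append_iff]
    exact Or.inl q₁.end_mem_support
  · intro hz
    have h := congrArg Walk.length (p.take_spec hz)
    rw [Walk.length_append, hT.length_eq_dist (hp.takeUntil hz),
      hT.length_eq_dist (hp.dropUntil hz), hT.length_eq_dist hp] at h
    exact h

theorem between_of_forall (h : ∀ s, G.Between x s z → G.Between z s y → s = z) :
    G.Between x z y := by
  obtain ⟨p, hp, hpl⟩ := hT.connected.exists_path_of_dist x z
  obtain ⟨q, hq, hql⟩ := hT.connected.exists_path_of_dist z y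
  have hdisj : p.support.Disjoint q.support.tail := by
    intro s hsp hsq
    have hsz := h s ((hT.between_iff_mem_support hp).2 hsp)
      ((hT.between_iff_mem_support hq).2 (List.mem_of_mem_tail hsq))
    have := hq.support_nodup
    rw [← q.cons_tail_support, List.nodup_cons] at this
    exact this.1 (hsz ▸ hsq)
  have hpq : (p.append q).IsPath := by
    rw [Walk.isPath_def, Walk.support_append]
    exact hp.support_nodup.append hq.support_nodup.tail hdisj
  have := hT.length_eq_dist hpq
  rw [Walk.length_append, hpl, hql] at this
  exact this

theorem exists_median (x y z : V) :
    ∃ t, G.Between x t y ∧ G.Between y t z ∧ G.Between z t x := by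
  let S := {u | G.Between x u y}
  have hS : S.Nonempty := ⟨x, between_self_left x y⟩
  set t := Function.argminOn (G.dist z) S hS
  have ht : G.Between x t y := Function.argminOn_mem _ S hS
  have hnear : ∀ s, G.Between z s t → G.Between x s y → s = t := by
    intro s hzst hs
    have : G.dist z t ≤ G.dist z s := Function.argminOn_le _ S hs
    unfold Between at hzst
    exact hT.connected.dist_eq_zero_iff.1 (by omega)
  refine ⟨t, ht, ?_, ?_⟩
  · refine (hT.between_of_forall fun s hzs hsy => hnear s hzs ?_).symm
    exact (ht.symm.trans_left hT.connected hsy.symm).symm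
  · exact hT.between_of_forall fun s hzs hsx => hnear s hzs (ht.trans_left hT.connected hsx.symm)

theorem eq_of_adj_of_between (ha : G.Adj x a) (hb : G.Adj x b) (hay : G.Between x a y)
    (hby : G.Between x b y) : a = b := by
  obtain ⟨p, hp, -⟩ := hT.connected.exists_path_of_dist x y
  rw [hT.isAcyclic.eq_snd_of_adj_start hp ha ((hT.between_iff_mem_support hp).1 hay),
    hT.isAcyclic.eq_snd_of_adj_start hp hb ((hT.between_iff_mem_support hp).1 hby)]

theorem between_of_adj_of_not_between (hc : G.Adj v c) (hr : ¬G.Between v c r)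
    (hl : G.Between v c l) : G.Between r v l := by
  refine hT.between_of_forall fun s hrs hsl => ?_
  by_contra hsv
  obtain ⟨a, hva, has⟩ := hT.connected.exists_adj_between (Ne.symm hsv)
  have hac : a = c := hT.eq_of_adj_of_between hva hc (hsl.trans_left hT.connected has) hl
  exact hr (hac ▸ hrs.symm.trans_left hT.connected has)

end IsTree

end SimpleGraph

section

variable {V : Type*} {T : SimpleGraph V} {a b c l l' l₁ l₂ m p r t u v v' v₁ v₂ w x y z : V}

theorem isMajor_of_adj [Finite V] (ha : T.Adj v a) (hb : T.Adj v b) (hc : T.Adj v c)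
    (hab : a ≠ b) (hbc : b ≠ c) (hca : c ≠ a) : IsMajor T v := by
  have hsub : ({a, b, c} : Set V) ⊆ T.neighborSet v := by
    rintro s (rfl | rfl | rfl) <;> assumption
  have h3 : ({a, b, c} : Set V).ncard = 3 :=
    Set.ncard_eq_three.2 ⟨a, b, c, hab, hca.symm, hbc, rfl⟩
  have := Set.ncard_le_ncard hsub
  unfold IsMajor
  omega

theorem SimpleGraph.Connected.isMajor_of_median [Finite V] (hc : T.Connected)
    (hxy : T.Between x t y) (hyz : T.Between y t z) (hzx : T.Between z t x)
    (hx : t ≠ x) (hy : t ≠ y) (hz : t ≠ z) : IsMajor T t := by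
  obtain ⟨a, hta, hax⟩ := hc.exists_adj_between hx
  obtain ⟨b, htb, hby⟩ := hc.exists_adj_between hy
  obtain ⟨c, htc, hcz⟩ := hc.exists_adj_between hz
  refine isMajor_of_adj hta htb htc ?_ ?_ ?_
  · exact fun h => hta.ne (hxy.eq_of_between_of_between hc hax (h ▸ hby)).symm
  · exact fun h => htb.ne (hyz.eq_of_between_of_between hc hby (h ▸ hcz)).symm
  · exact fun h => htc.ne (hzx.eq_of_between_of_between hc hcz (h ▸ hax)).symm

theorem IsLeaf.eq_of_adj (hl : IsLeaf T l) (ha : T.Adj l a) (hb : T.Adj l b) : a = b := by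
  obtain ⟨x, hx⟩ := Set.ncard_eq_one.1 hl
  have ha' : a ∈ T.neighborSet l := ha
  have hb' : b ∈ T.neighborSet l := hb
  rw [hx] at ha' hb'
  exact ha'.trans hb'.symm

theorem IsLeaf.not_isMajor (hl : IsLeaf T l) : ¬IsMajor T l := by
  unfold IsLeaf at hl
  unfold IsMajor
  omega

theorem IsLeaf.eq_or_eq_of_between (hc : T.Connected) (hl : IsLeaf T l)
    (h : T.Between x l y) : l = x ∨ l = y := by
  by_contra! hne
  obtain ⟨a, hla, hax⟩ := hc.exists_adj_between hne.1
  obtain ⟨b, hlb, hby⟩ := hc.exists_adj_between hne.2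
  exact hla.ne (h.eq_of_between_of_between hc hax (hl.eq_of_adj hla hlb ▸ hby)).symm

namespace SimpleGraph.IsTree

variable [Finite V] (hT : T.IsTree)
include hT

theorem ncard_neighborSet_le (v r : V) :
    (T.neighborSet v).ncard ≤ {c ∈ T.neighborSet v | ¬T.Between v c r}.ncard + 1 := by
  have htoward : {c ∈ T.neighborSet v | T.Between v c r}.Subsingleton :=
    fun a ha b hb => hT.eq_of_adj_of_between ha.1 hb.1 ha.2 hb.2
  have hsplit : T.neighborSet v ⊆
      {c ∈ T.neighborSet v | ¬T.Between v c r} ∪ {c ∈ T.neighborSet v | T.Between v c r} := by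
    intro c hc
    by_cases h : T.Between v c r
    · exact Or.inr ⟨hc, h⟩
    · exact Or.inl ⟨hc, h⟩
  have := Set.ncard_le_ncard hsplit
  have := Set.ncard_union_le {c ∈ T.neighborSet v | ¬T.Between v c r}
    {c ∈ T.neighborSet v | T.Between v c r}
  have := (Set.ncard_le_one_iff).2 fun ha hb => htoward ha hb
  omega

theorem exists_isLeaf_between (hux : T.Adj u x) : ∃ l, IsLeaf T l ∧ T.Between u x l := by
  obtain ⟨l, hxl, hmax⟩ := Set.exists_max_image {p | T.Between u x p} (T.dist u)
    (Set.toFinite _) ⟨x, between_self_right u x⟩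
  refine ⟨l, ?_, hxl⟩
  by_contra hleaf
  have hlu : l ≠ u := by
    rintro rfl
    exact hux.ne (eq_of_between_self hT.connected hxl).symm
  obtain ⟨s, hls, -⟩ := hT.connected.exists_adj_between hlu
  have : 0 < (T.neighborSet l).ncard := (Set.ncard_pos (Set.toFinite _)).2 ⟨s, hls⟩
  have := hT.ncard_neighborSet_le l u
  obtain ⟨c, hlc, hcu⟩ : {c ∈ T.neighborSet l | ¬T.Between l c u}.Nonempty := by
    apply Set.nonempty_of_ncard_ne_zero
    unfold IsLeaf at hleaf
    omega
  have hulc : T.Between u l c := hT.between_of_adj_of_not_between hlc hcu (between_self_right l c)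
  have := hmax c (hulc.trans_left hT.connected hxl)
  unfold Between at hulc
  rw [dist_eq_one_iff_adj.2 hlc] at hulc
  omega

theorem exists_isMajor_forall_between (hl : IsLeaf T l) (h : ∃ v, IsMajor T v) :
    ∃ v, IsMajor T v ∧ ∀ w, IsMajor T w → T.Between l v w := by
  obtain ⟨v, hv, hmin⟩ := Set.exists_min_image {w | IsMajor T w} (T.dist l) (Set.toFinite _) h
  refine ⟨v, hv, fun w hw => ?_⟩
  obtain ⟨t, hltv, hvtw, hwtl⟩ := hT.exists_median l v w
  suffices htv : t = v from htv ▸ hwtl.symm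
  by_contra htv
  have ht : IsMajor T t := by
    by_cases htw : t = w
    · exact htw ▸ hw
    by_cases htl : t = l
    · subst htl
      rcases hl.eq_or_eq_of_between hT.connected hvtw with rfl | rfl
      · exact absurd hv hl.not_isMajor
      · exact absurd hw hl.not_isMajor
    exact hT.connected.isMajor_of_median hltv hvtw hwtl htl htv htw
  have := hmin t ht
  have := hT.connected.pos_dist_of_ne htv
  unfold Between at hltv
  omega

end SimpleGraph.IsTree

theorem isTerminalOf_of_forall_between (hc : T.Connected) (hl : IsLeaf T l) (hv : IsMajor T v)
    (h : ∀ w, IsMajor T w → T.Between l v w) : IsTerminalOf T l v := by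
  refine ⟨hl, hv, fun w hw hwv => ?_⟩
  have hlvw := h w hw
  have := hc.pos_dist_of_ne (Ne.symm hwv)
  unfold Between at hlvw
  omega

theorem SimpleGraph.IsTree.exists_isTerminalOf [Finite V] (hT : T.IsTree) (hl : IsLeaf T l)
    (h : ∃ v, IsMajor T v) : ∃ v, IsTerminalOf T l v := by
  obtain ⟨v, hv, hall⟩ := hT.exists_isMajor_forall_between hl h
  exact ⟨v, isTerminalOf_of_forall_between hT.connected hl hv hall⟩

theorem SimpleGraph.IsTree.isTerminalOf_of_forall_not_between (hT : T.IsTree)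
    (hm : IsMajor T m) (hma : T.Adj m a) (hno : ∀ w, IsMajor T w → ¬T.Between m a w)
    (hl : IsLeaf T l) (hal : T.Between m a l) : IsTerminalOf T l m :=
  isTerminalOf_of_forall_between hT.connected hl hm fun w hw =>
    (hT.between_of_adj_of_not_between hma (hno w hw) hal).symm

def leg (T : SimpleGraph V) (l v : V) : Set V :=
  {u | T.Between l u v ∧ u ≠ v}

namespace IsTerminalOf

theorem ne (h : IsTerminalOf T l v) : l ≠ v :=
  fun hlv => h.1.not_isMajor (hlv ▸ h.2.1)

theorem unique (h : IsTerminalOf T l v) (h' : IsTerminalOf T l v') : v = v' := by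
  by_contra hne
  have := h.2.2 v' h'.2.1 (Ne.symm hne)
  have := h'.2.2 v h.2.1 hne
  omega

theorem eq_of_between (h : IsTerminalOf T l v) (hw : IsMajor T w) (hb : T.Between l w v) :
    w = v := by
  by_contra hne
  have := h.2.2 w hw hne
  unfold Between at hb
  omega

variable [Finite V] (hT : T.IsTree)
include hT

theorem between_of_not_between (h : IsTerminalOf T l v) (hw : ¬T.Between w v l) :
    T.Between v w l := by
  obtain ⟨t, hvtw, hwtl, hltv⟩ := hT.exists_median v w l
  by_cases htv : t = v
  · exact absurd (htv ▸ hwtl) hw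
  by_cases htw : t = w
  · exact htw ▸ hltv.symm
  by_cases htl : t = l
  · subst htl
    rcases h.1.eq_or_eq_of_between hT.connected hvtw with rfl | rfl
    · exact absurd rfl h.ne
    · exact between_self_right v t
  exact absurd (h.eq_of_between (hT.connected.isMajor_of_median hvtw hwtl hltv htv htw htl) hltv)
    htv

theorem between_of_ne (h : IsTerminalOf T l v) (hl' : IsLeaf T l') (hne : l' ≠ l) :
    T.Between l' v l := by
  by_contra hb
  rcases hl'.eq_or_eq_of_between hT.connected (h.between_of_not_between hT hb) with rfl | rfl
  · exact hl'.not_isMajor h.2.1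
  · exact hne rfl

theorem disjoint_leg (h₁ : IsTerminalOf T l₁ v₁) (h₂ : IsTerminalOf T l₂ v₂) (hne : l₁ ≠ l₂) :
    Disjoint (leg T l₁ v₁) (leg T l₂ v₂) := by
  refine Set.disjoint_left.2 fun u ⟨hu₁, huv₁⟩ ⟨hu₂, huv₂⟩ => ?_
  have hv₁ : T.Between l₂ v₁ l₁ := h₁.between_of_ne hT h₂.1 hne.symm
  have hv₂ : T.Between l₁ v₂ l₂ := h₂.between_of_ne hT h₁.1 hne
  have hu : T.Between u v₂ l₁ := hv₂.symm.trans_left_right hT.connected hu₂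
  obtain rfl : v₂ = v₁ := h₁.eq_of_between h₂.2.1 (hu₁.trans_left hT.connected hu.symm)
  exact huv₁ (hv₁.eq_of_between_of_between hT.connected hu₂.symm hu₁.symm)

theorem mem_leg (h : IsTerminalOf T l v) (hva : T.Adj v a) (hal : T.Between v a l)
    (haz : T.Between v a z) : z ∈ leg T l v := by
  refine ⟨(h.between_of_not_between hT fun hz => hva.ne ?_).symm, ?_⟩
  · exact (hz.eq_of_between_of_between hT.connected haz hal).symm
  · rintro rfl
    exact hva.ne (eq_of_between_self hT.connected haz).symm

end IsTerminalOf

namespace IsResolving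

variable [Finite V] {W : Set V} (hT : T.IsTree)
include hT

theorem exists_mem_leg (hW : IsResolving T W) (h₁ : IsTerminalOf T l₁ v)
    (h₂ : IsTerminalOf T l₂ v) (hne : l₁ ≠ l₂) :
    (W ∩ leg T l₁ v).Nonempty ∨ (W ∩ leg T l₂ v).Nonempty := by
  by_contra! hmiss
  have hfirst : ∀ {l}, IsTerminalOf T l v → W ∩ leg T l v = ∅ →
      ∃ a ∈ leg T l v, ∀ z ∈ W, T.dist a z = T.dist v z + 1 := by
    intro l h hmiss
    obtain ⟨a, hva, hal⟩ := hT.connected.exists_adj_between h.ne.symm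
    refine ⟨a, h.mem_leg hT hva hal (between_self_right v a), fun z hz => ?_⟩
    have hza : T.Between z v a := hT.between_of_adj_of_not_between hva
      (fun haz => (Set.eq_empty_iff_forall_notMem.1 hmiss) z ⟨hz, h.mem_leg hT hva hal haz⟩)
      (between_self_right v a)
    unfold Between at hza
    rw [dist_eq_one_iff_adj.2 hva, dist_comm (u := z), dist_comm (u := z)] at hza
    omega
  obtain ⟨a₁, ha₁, hd₁⟩ := hfirst h₁ hmiss.1
  obtain ⟨a₂, ha₂, hd₂⟩ := hfirst h₂ hmiss.2
  have hne : a₁ ≠ a₂ := fun h => Set.disjoint_left.1 (h₁.disjoint_leg hT h₂ hne) ha₁ (h ▸ ha₂)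
  obtain ⟨z, hz, hdz⟩ := hW a₁ a₂ hne
  exact hdz ((hd₁ z hz).trans (hd₂ z hz).symm)

theorem ncard_setOf_isLeaf_le (hW : IsResolving T W) (h : ∃ v, IsMajor T v) :
    {l | IsLeaf T l}.ncard ≤ {v | IsExteriorMajor T v}.ncard + W.ncard := by
  choose! stem hstem using fun l (hl : IsLeaf T l) => hT.exists_isTerminalOf hl h
  set L := {l | IsLeaf T l}
  set B := {l ∈ L | W ∩ leg T l (stem l) = ∅}
  have hB : B.ncard ≤ {v | IsExteriorMajor T v}.ncard := by
    refine Set.ncard_le_ncard_of_injOn stem (fun l hl => ⟨l, hstem l hl.1⟩) ?_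
    intro l₁ hl₁ l₂ hl₂ hs
    by_contra hne
    rcases hW.exists_mem_leg hT (hstem l₁ hl₁.1) (hs ▸ hstem l₂ hl₂.1) hne with hm | hm
    · exact hm.ne_empty hl₁.2
    · exact hm.ne_empty (hs ▸ hl₂.2)
  choose! pick hpick using fun l (hl : l ∈ L \ B) =>
    Set.nonempty_iff_ne_empty.2 fun he => hl.2 ⟨hl.1, he⟩
  have hLB : (L \ B).ncard ≤ W.ncard := by
    refine Set.ncard_le_ncard_of_injOn pick (fun l hl => (hpick l hl).1) ?_
    intro l₁ hl₁ l₂ hl₂ hp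
    by_contra hne
    exact Set.disjoint_left.1 ((hstem l₁ hl₁.1.out).disjoint_leg hT (hstem l₂ hl₂.1.out) hne)
      (hpick l₁ hl₁).2 (hp ▸ (hpick l₂ hl₂).2)
  have := Set.ncard_le_ncard_sdiff_add_ncard L B
  omega

end IsResolving

theorem SimpleGraph.IsTree.dist_lt_of_between (hT : T.IsTree) (hma : T.Adj m a)
    (hax : T.Between m a x) (hxmy : T.Between x m y) (hap : T.Between m a p)
    (hxy : T.dist x m ≤ T.dist y m) : T.dist x p < T.dist y p := by
  have hG := hT.connected
  have hay : ¬T.Between m a y := fun hay => hma.ne (hxmy.eq_of_between_of_between hG hax hay).symm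
  have hymp : T.Between y m p := hT.between_of_adj_of_not_between hma hay hap
  have hxmp : ¬T.Between x m p := fun h => hma.ne (h.eq_of_between_of_between hG hax hap).symm
  have := hG.dist_triangle (u := x) (v := m) (w := p)
  unfold Between at hymp hxmp
  omega

namespace SimpleGraph.IsTree

variable [Finite V] (hT : T.IsTree)
include hT

theorem exists_isTerminalOf_ne (hv : IsMajor T v)
    (hmax : ∀ w, IsMajor T w → T.Between r v w → w = v) :
    ∃ l₁ l₂, l₁ ≠ l₂ ∧ IsTerminalOf T l₁ v ∧ IsTerminalOf T l₂ v ∧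
      T.Between r v l₁ ∧ T.Between r v l₂ := by
  have hbeyond : ∀ c, T.Adj v c → ¬T.Between v c r →
      ∃ l, IsTerminalOf T l v ∧ T.Between v c l ∧ T.Between r v l := by
    intro c hvc hcr
    obtain ⟨l, hl, hcl⟩ := hT.exists_isLeaf_between hvc
    refine ⟨l, hT.isTerminalOf_of_forall_not_between hv hvc (fun w hw hcw => hvc.ne ?_) hl hcl,
      hcl, hT.between_of_adj_of_not_between hvc hcr hcl⟩
    obtain rfl := hmax w hw (hT.between_of_adj_of_not_between hvc hcr hcw)
    exact (eq_of_between_self hT.connected hcw).symm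
  have := hT.ncard_neighborSet_le v r
  obtain ⟨c₁, c₂, hc₁, hc₂, hne⟩ :=
    (Set.one_lt_ncard_iff (s := {c ∈ T.neighborSet v | ¬T.Between v c r})).1
      (by unfold IsMajor at hv; omega)
  obtain ⟨l₁, h₁, hcl₁, hr₁⟩ := hbeyond c₁ hc₁.1 hc₁.2
  obtain ⟨l₂, h₂, hcl₂, hr₂⟩ := hbeyond c₂ hc₂.1 hc₂.2
  refine ⟨l₁, l₂, ?_, h₁, h₂, hr₁, hr₂⟩
  rintro rfl
  exact hne (hT.eq_of_adj_of_between hc₁.1 hc₂.1 hcl₁ hcl₂)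

variable {W : Set V}
  (hW : ∀ v l₁ l₂, IsTerminalOf T l₁ v → IsTerminalOf T l₂ v → l₁ ≠ l₂ → l₁ ∈ W ∨ l₂ ∈ W)
include hW

theorem exists_mem_between_of_isMajor (h : ∃ w, IsMajor T w ∧ T.Between r c w) :
    ∃ l ∈ W, T.Between r c l := by
  obtain ⟨v, ⟨hv, hcv⟩, hmax⟩ :=
    Set.exists_max_image {w | IsMajor T w ∧ T.Between r c w} (T.dist r) (Set.toFinite _) h
  have hfar : ∀ w, IsMajor T w → T.Between r v w → w = v := by
    intro w hw hvw
    have := hmax w ⟨hw, hvw.trans_left hT.connected hcv⟩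
    unfold Between at hvw
    exact (hT.connected.dist_eq_zero_iff.1 (by omega)).symm
  obtain ⟨l₁, l₂, hne, h₁, h₂, hv₁, hv₂⟩ := hT.exists_isTerminalOf_ne hv hfar
  rcases hW v l₁ l₂ h₁ h₂ hne with hl | hl
  · exact ⟨l₁, hl, hv₁.trans_left hT.connected hcv⟩
  · exact ⟨l₂, hl, hv₂.trans_left hT.connected hcv⟩

theorem exists_mem_between_of_adj (hmaj : ∃ v, IsMajor T v) (ha : T.Adj m a) (hb : T.Adj m b)
    (hab : a ≠ b) : ∃ l ∈ W, T.Between m a l ∨ T.Between m b l := by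
  by_cases hA : ∃ w, IsMajor T w ∧ T.Between m a w
  · obtain ⟨l, hl, hal⟩ := hT.exists_mem_between_of_isMajor hW hA
    exact ⟨l, hl, Or.inl hal⟩
  by_cases hB : ∃ w, IsMajor T w ∧ T.Between m b w
  · obtain ⟨l, hl, hbl⟩ := hT.exists_mem_between_of_isMajor hW hB
    exact ⟨l, hl, Or.inr hbl⟩
  simp only [not_exists, not_and] at hA hB
  by_cases hm : IsMajor T m
  · obtain ⟨la, hla, hmla⟩ := hT.exists_isLeaf_between ha
    obtain ⟨lb, hlb, hmlb⟩ := hT.exists_isLeaf_between hb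
    have hne : la ≠ lb := by
      rintro rfl
      exact hab (hT.eq_of_adj_of_between ha hb hmla hmlb)
    rcases hW m la lb (hT.isTerminalOf_of_forall_not_between hm ha hA hla hmla)
      (hT.isTerminalOf_of_forall_not_between hm hb hB hlb hmlb) hne with h | h
    · exact ⟨la, h, Or.inl hmla⟩
    · exact ⟨lb, h, Or.inr hmlb⟩
  · obtain ⟨w, hw⟩ := hmaj
    obtain ⟨s, hms, hsw⟩ := hT.connected.exists_adj_between fun h : m = w => hm (h ▸ hw)
    have : s = a ∨ s = b := by
      by_contra! hs
      exact hm (isMajor_of_adj ha hb hms hab (Ne.symm hs.2) hs.1)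
    rcases this with rfl | rfl
    · exact absurd hsw (hA w hw)
    · exact absurd hsw (hB w hw)

theorem isResolving_of_forall_isTerminalOf (hmaj : ∃ v, IsMajor T v) : IsResolving T W := by
  intro x y hxy
  by_contra! hno
  obtain ⟨w, hw⟩ := hmaj
  obtain ⟨l₀, hl₀, -⟩ := hT.exists_mem_between_of_isMajor hW ⟨w, hw, between_self_left w w⟩
  obtain ⟨m, hxmy, hyml, hlmx⟩ := hT.exists_median x y l₀
  have hm : T.dist x m = T.dist y m := by
    have := hno l₀ hl₀
    have := T.dist_comm (u := x) (v := m)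
    have := T.dist_comm (u := l₀) (v := m)
    have := T.dist_comm (u := x) (v := l₀)
    unfold Between at hyml hlmx
    omega
  have hm_ne : ∀ {x y}, x ≠ y → T.dist x m = T.dist y m → m ≠ x := by
    rintro x y hxy hm rfl
    rw [dist_self] at hm
    exact hxy (hT.connected.dist_eq_zero_iff.1 hm.symm).symm
  obtain ⟨a, hma, hax⟩ := hT.connected.exists_adj_between (hm_ne hxy hm)
  obtain ⟨b, hmb, hby⟩ := hT.connected.exists_adj_between (hm_ne hxy.symm hm.symm)
  have hab : a ≠ b := fun h =>
    hma.ne (hxmy.eq_of_between_of_between hT.connected hax (h ▸ hby)).symm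
  obtain ⟨l, hl, hal | hbl⟩ := hT.exists_mem_between_of_adj hW ⟨w, hw⟩ hma hmb hab
  · exact (hT.dist_lt_of_between hma hax hxmy hal hm.le).ne (hno l hl)
  · exact (hT.dist_lt_of_between hmb hby hxmy.symm hbl hm.ge).ne (hno l hl).symm

end SimpleGraph.IsTree

theorem SimpleGraph.IsTree.exists_isResolving_ncard_eq [Finite V] (hT : T.IsTree)
    (hmaj : ∃ v, IsMajor T v) : ∃ W : Set V,
      W.ncard = {l | IsLeaf T l}.ncard - {v | IsExteriorMajor T v}.ncard ∧ IsResolving T W := by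
  choose! g hg using fun v (hv : IsExteriorMajor T v) => hv
  have hgE : g '' {v | IsExteriorMajor T v} ⊆ {l | IsLeaf T l} := by
    rintro _ ⟨v, hv, rfl⟩
    exact (hg v hv).1
  have hginj : Set.InjOn g {v | IsExteriorMajor T v} :=
    fun v₁ h₁ v₂ h₂ he => (hg v₁ h₁).unique (he ▸ hg v₂ h₂)
  refine ⟨{l | IsLeaf T l} \ g '' {v | IsExteriorMajor T v}, ?_,
    hT.isResolving_of_forall_isTerminalOf ?_ hmaj⟩
  · rw [Set.ncard_sdiff hgE, hginj.ncard_image]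
  · intro v l₁ l₂ h₁ h₂ hne
    by_contra! hout
    have hchosen : ∀ {l}, IsTerminalOf T l v →
        l ∉ {l | IsLeaf T l} \ g '' {v | IsExteriorMajor T v} → l = g v := by
      intro l hl hlW
      obtain ⟨v', hv', rfl⟩ := not_not.1 fun hn => hlW ⟨hl.1, hn⟩
      rw [(hg v' hv').unique hl]
    exact hne ((hchosen h₁ hout.1).trans (hchosen h₂ hout.2).symm)

end

theorem metricDim_tree {V : Type*} [Fintype V] (T : SimpleGraph V)
    (hT : T.IsTree) (hnp : ∃ v, IsMajor T v) :
    metricDim T = {v | IsLeaf T v}.ncard - {v | IsExteriorMajor T v}.ncard := by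
  obtain ⟨W, hcard, hW⟩ := hT.exists_isResolving_ncard_eq hnp
  refine le_antisymm (Nat.sInf_le ⟨W, hcard, hW⟩) (le_csInf ⟨_, W, hcard, hW⟩ ?_)
  rintro n ⟨W', rfl, hW'⟩
  have := hW'.ncard_setOf_isLeaf_le hT hnp
  omega
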